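/- arXiv:2202.03481 — 2 statements merged into one kernel-verified Lean document; each statement's English description precedes it below -/
import Mathlib

section
/- For probability mass functions p and q on a finite set with q everywhere positive, D_f(p‖q) = 0 with f(x)=(1-x)/(1+x) if and only if p = q. -/
theorem fdiv_eq_zero_iff {S : Type*} [Fintype S] (p q : S → ℝ)
    (hp : ∀ s, 0 ≤ p s) (hp1 : ∑ s, p s = 1)
    (hq : ∀ s, 0 < q s) (hq1 : ∑ s, q s = 1) :
    (∑ s, q s * ((q s - p s) / (q s + p s))) = 0 ↔ p = q := by
  have hpos : ∀ s, 0 < q s + p s := fun s => by have := hq s; have := hp s; linarith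
  have hsplit : ∀ s, q s * ((q s - p s) / (q s + p s)) =
      (q s - p s) / 2 + (q s - p s)^2 / (2 * (q s + p s)) := by
    intro s
    have h := (hpos s).ne'
    field_simp
    ring
  constructor
  · intro h
    have hsum : ∑ s, ((q s - p s) / 2 + (q s - p s)^2 / (2 * (q s + p s))) = 0 := by
      rw [← Finset.sum_congr rfl (fun s _ => hsplit s)]; exact h
    rw [Finset.sum_add_distrib] at hsum
    have h1 : ∑ s, (q s - p s) / 2 = 0 := by
      rw [← Finset.sum_div, Finset.sum_sub_distrib, hp1, hq1]; norm_num
    have h2 : ∑ s, (q s - p s)^2 / (2 * (q s + p s)) = 0 := by linarith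
    have hnn : ∀ s ∈ Finset.univ, 0 ≤ (q s - p s)^2 / (2 * (q s + p s)) := by
      intro s _
      exact div_nonneg (sq_nonneg _) (by linarith [hpos s])
    have := (Finset.sum_eq_zero_iff_of_nonneg hnn).mp h2
    funext s
    have hs := this s (Finset.mem_univ s)
    have : (q s - p s)^2 = 0 := by
      rcases div_eq_zero_iff.mp hs with h' | h'
      · exact h'
      · exact absurd h' (by have := hpos s; positivity)
    have := sq_eq_zero_iff.mp this
    linarith
  · intro h
    subst h
    simp
end

section
/- Suppose p, q are probability mass functions on a finite set S with p(s)+q(s) > 0 for all s, k > 0, and R̂ : S → ℝ satisfies |R̂(s) − k·p(s)/(p(s)+q(s))| ≤ ε_r for all s (reward generalization error). If additionally (1/(1−γ))·(∑_s p(s)·R̂(s) − ∑_s q(s)·R̂(s)) ≤ ε_π for some γ ∈ [0,1) and ε_π ≥ 0 (policy near-optimality), then ∑_s p(s)·(p(s)−q(s))/(p(s)+q(s)) ≤ ((1−γ)·ε_π + 2·ε_r)/k. -/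
/-!
Multiplied by `k`, the left-hand side is `∑ (p - q) R` for the exact minimizer
`R = k p / (p + q)`. Replacing `R` by `R̂` costs at most `∑ (p + q) εr = 2 εr`, since
`|p - q| ≤ p + q`, and `∑ (p - q) R̂` is the policy gap, at most `(1 - γ) επ`.
-/

open Finset

theorem sub_mul_le_add_mul_abs {a b : ℝ} (ha : 0 ≤ a) (hb : 0 ≤ b) (x : ℝ) :
    (a - b) * x ≤ (a + b) * |x| := by
  calc (a - b) * x ≤ |a - b| * |x| := (le_abs_self _).trans (abs_mul _ _).le
    _ ≤ (|a| + |b|) * |x| := by gcongr; exact abs_sub _ _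
    _ = (a + b) * |x| := by rw [abs_of_nonneg ha, abs_of_nonneg hb]

theorem sum_sub_mul_le_of_abs_sub_le {ι : Type*} (t : Finset ι) {p q f g : ι → ℝ}
    (hp : ∀ i, 0 ≤ p i) (hq : ∀ i, 0 ≤ q i) {ε : ℝ} (hfg : ∀ i, |f i - g i| ≤ ε) :
    ∑ i ∈ t, (p i - q i) * f i ≤ ∑ i ∈ t, (p i - q i) * g i + (∑ i ∈ t, (p i + q i)) * ε := by
  rw [← sub_le_iff_le_add', ← sum_sub_distrib, sum_mul]
  refine sum_le_sum fun i _ => ?_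
  calc (p i - q i) * f i - (p i - q i) * g i = (p i - q i) * (f i - g i) := by ring
    _ ≤ (p i + q i) * |f i - g i| := sub_mul_le_add_mul_abs (hp i) (hq i) _
    _ ≤ (p i + q i) * ε := by gcongr; exacts [add_nonneg (hp i) (hq i), hfg i]

theorem rank_game_main_general {S : Type*} [Fintype S] (p q : S → ℝ) (k γ επ εr : ℝ)
    (Rhat : S → ℝ)
    (hp : ∀ s, 0 ≤ p s) (hp1 : ∑ s, p s = 1)
    (hq : ∀ s, 0 ≤ q s) (hq1 : ∑ s, q s = 1)
    (hk : 0 < k)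
    (hγ1 : γ < 1)
    (hgen : ∀ s, |Rhat s - k * p s / (p s + q s)| ≤ εr)
    (hpol : (1 / (1 - γ)) * ((∑ s, p s * Rhat s) - ∑ s, q s * Rhat s) ≤ επ) :
    (∑ s, p s * ((p s - q s) / (p s + q s))) ≤ ((1 - γ) * επ + 2 * εr) / k := by
  have hpolicy : ∑ s, (p s - q s) * Rhat s ≤ (1 - γ) * επ := by
    rw [one_div_mul_eq_div, div_le_iff₀' (sub_pos.2 hγ1)] at hpol
    simpa only [sub_mul, sum_sub_distrib] using hpol
  have hreward : ∑ s, (p s - q s) * (k * p s / (p s + q s))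
      ≤ ∑ s, (p s - q s) * Rhat s + 2 * εr := by
    have := sum_sub_mul_le_of_abs_sub_le univ hp hq fun s => (abs_sub_comm _ _).trans_le (hgen s)
    rwa [sum_add_distrib, hp1, hq1, one_add_one_eq_two] at this
  rw [le_div_iff₀ hk, sum_mul]
  calc ∑ s, p s * ((p s - q s) / (p s + q s)) * k
      = ∑ s, (p s - q s) * (k * p s / (p s + q s)) := sum_congr rfl fun s _ => by ring
    _ ≤ (1 - γ) * επ + 2 * εr := by linarith

theorem rank_game_main {S : Type*} [Fintype S] (p q : S → ℝ) (k γ επ εr : ℝ)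
    (Rhat : S → ℝ)
    (hp : ∀ s, 0 ≤ p s) (hp1 : ∑ s, p s = 1)
    (hq : ∀ s, 0 ≤ q s) (hq1 : ∑ s, q s = 1)
    (hpq : ∀ s, 0 < p s + q s) (hk : 0 < k)
    (hγ : 0 ≤ γ) (hγ1 : γ < 1) (hεπ : 0 ≤ επ) (hεr : 0 ≤ εr)
    (hgen : ∀ s, |Rhat s - k * p s / (p s + q s)| ≤ εr)
    (hpol : (1 / (1 - γ)) * ((∑ s, p s * Rhat s) - ∑ s, q s * Rhat s) ≤ επ) :
    (∑ s, p s * ((p s - q s) / (p s + q s))) ≤ ((1 - γ) * επ + 2 * εr) / k :=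
  rank_game_main_general p q k γ επ εr Rhat hp hp1 hq hq1 hk hγ1 hgen hpol
end
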